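/- arXiv:2101.10494 — 2 statements merged into one kernel-verified Lean document; each statement's English description precedes it below -/
import Mathlib

section
/- (Theorem 1(1), Church–Rosser) Every pair of terms that are equivalent under =_CM have a common rewrite: if F =_CM G then there exists a term U with F ↠_{1-7} U and G ↠_{1-7} U. -/
/-- Terms of the free (quasi-)Cartesian monoid: constants `I, L, R`,
composition `comp` (written `*` in the paper) and pairing `pair`. -/
inductive Term : Type
  | I : Term
  | L : Term
  | R : Term
  | comp : Term → Term → Term
  | pair : Term → Term → Term
  deriving DecidableEq

open Term

/-- The rewrite rules (1)-(7), indexed by their number. -/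
inductive Rule : ℕ → Term → Term → Prop
  | r1 (x y : Term) : Rule 1 (comp L (pair x y)) x
  | r2 (x y : Term) : Rule 2 (comp R (pair x y)) y
  | r3 (x y z : Term) : Rule 3 (comp (pair x y) z) (pair (comp x z) (comp y z))
  | r4 (x : Term) : Rule 4 (comp I x) x
  | r5 (x : Term) : Rule 5 (comp x I) x
  | r6 (x : Term) : Rule 6 (pair (comp L x) (comp R x)) x
  | r7 : Rule 7 (pair L R) I

/-- The congruence generated by associativity of `comp`. -/
inductive AssocEq : Term → Term → Prop
  | assoc (a b c : Term) : AssocEq (comp (comp a b) c) (comp a (comp b c))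
  | refl (a : Term) : AssocEq a a
  | symm {a b : Term} : AssocEq a b → AssocEq b a
  | trans {a b c : Term} : AssocEq a b → AssocEq b c → AssocEq a c
  | comp_congr {a a' b b' : Term} :
      AssocEq a a' → AssocEq b b' → AssocEq (comp a b) (comp a' b')
  | pair_congr {a a' b b' : Term} :
      AssocEq a a' → AssocEq b b' → AssocEq (pair a b) (pair a' b')

/-- One-step rewriting by a rule whose index lies in `J`,
closed under replacement of subterms (monotone closure). -/
inductive Step (J : Set ℕ) : Term → Term → Prop
  | rule {n : ℕ} {x y : Term} : n ∈ J → Rule n x y → Step J x y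
  | comp_left {a a' b : Term} : Step J a a' → Step J (comp a b) (comp a' b)
  | comp_right {a b b' : Term} : Step J b b' → Step J (comp a b) (comp a b')
  | pair_left {a a' b : Term} : Step J a a' → Step J (pair a b) (pair a' b)
  | pair_right {a b b' : Term} : Step J b b' → Step J (pair a b) (pair a b')

/-- One-step rewriting modulo associativity. -/
def StepA (J : Set ℕ) (a b : Term) : Prop :=
  ∃ a' b', AssocEq a a' ∧ Step J a' b' ∧ AssocEq b' b

/-- Many-step rewriting `↠_J`: the monotone reflexive transitive closure of
one-step rewriting by the rules in `J`, modulo associativity. -/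
def Red (J : Set ℕ) (a b : Term) : Prop :=
  ∃ c, Relation.ReflTransGen (StepA J) a c ∧ AssocEq c b

/-- `a` is in normal form w.r.t. the rules in `J` (modulo associativity). -/
def NF (J : Set ℕ) (a : Term) : Prop := ∀ b, ¬ StepA J a b

/-- Rules (1)-(7). -/
def rules17 : Set ℕ := {n | 1 ≤ n ∧ n ≤ 7}
/-- Rules (1)-(5). -/
def rules15 : Set ℕ := {n | 1 ≤ n ∧ n ≤ 5}
/-- Rules (1)-(4). -/
def rules14 : Set ℕ := {n | 1 ≤ n ∧ n ≤ 4}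
/-- Rules (5), (6), (7). -/
def rules567 : Set ℕ := {5, 6, 7}

/-- The congruence `=_CM` generated by the Cartesian monoid axioms (i)-(iv)
and the monoid axioms for `comp` with unit `I`. -/
inductive CMEq : Term → Term → Prop
  | proj_left (f g : Term) : CMEq (comp L (pair f g)) f
  | proj_right (f g : Term) : CMEq (comp R (pair f g)) g
  | lift (f g h : Term) : CMEq (comp (pair f g) h) (pair (comp f h) (comp g h))
  | surj : CMEq (pair L R) I
  | assoc (a b c : Term) : CMEq (comp (comp a b) c) (comp a (comp b c))
  | one_mul (a : Term) : CMEq (comp I a) a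
  | mul_one (a : Term) : CMEq (comp a I) a
  | refl (a : Term) : CMEq a a
  | symm {a b : Term} : CMEq a b → CMEq b a
  | trans {a b c : Term} : CMEq a b → CMEq b c → CMEq a c
  | comp_congr {a a' b b' : Term} :
      CMEq a a' → CMEq b b' → CMEq (comp a b) (comp a' b')
  | pair_congr {a a' b b' : Term} :
      CMEq a a' → CMEq b b' → CMEq (pair a b) (pair a' b')

/-- The congruence `=_CQ` generated by the axioms (i)-(iii)
and the monoid axioms (no surjectivity `⟨L,R⟩ = I`). -/
inductive CQEq : Term → Term → Prop
  | proj_left (f g : Term) : CQEq (comp L (pair f g)) f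
  | proj_right (f g : Term) : CQEq (comp R (pair f g)) g
  | lift (f g h : Term) : CQEq (comp (pair f g) h) (pair (comp f h) (comp g h))
  | assoc (a b c : Term) : CQEq (comp (comp a b) c) (comp a (comp b c))
  | one_mul (a : Term) : CQEq (comp I a) a
  | mul_one (a : Term) : CQEq (comp a I) a
  | refl (a : Term) : CQEq a a
  | symm {a b : Term} : CQEq a b → CQEq b a
  | trans {a b c : Term} : CQEq a b → CQEq b c → CQEq a c
  | comp_congr {a a' b b' : Term} :
      CQEq a a' → CQEq b b' → CQEq (comp a b) (comp a' b')
  | pair_congr {a a' b b' : Term} :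
      CQEq a a' → CQEq b b' → CQEq (pair a b) (pair a' b')

/-- An injective numerical encoding of terms, used to state computability. -/
def encodeTerm : Term → ℕ
  | I => 0
  | L => 1
  | R => 2
  | comp a b => 2 * Nat.pair (encodeTerm a) (encodeTerm b) + 3
  | pair a b => 2 * Nat.pair (encodeTerm a) (encodeTerm b) + 4

/-- A numerical encoding of finite lists of terms. -/
def encodeTermList : List Term → ℕ
  | [] => 0
  | a :: l => Nat.pair (encodeTerm a) (encodeTermList l) + 1

/-- The product of a list of terms (with `I` as the empty product). -/
def listProd : List Term → Term
  | [] => I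
  | a :: l => comp a (listProd l)

/-- `=_CQ` as a setoid. -/
def cqSetoid : Setoid Term :=
  ⟨CQEq, ⟨fun a => CQEq.refl a, fun h => h.symm, fun h₁ h₂ => h₁.trans h₂⟩⟩

/-- The free categorical quasiproduct monoid `CQ = T / =_CQ`. -/
def CQ : Type := Quotient cqSetoid

/-- `=_CM` as a setoid. -/
def cmSetoid : Setoid Term :=
  ⟨CMEq, ⟨fun a => CMEq.refl a, fun h => h.symm, fun h₁ h₂ => h₁.trans h₂⟩⟩

/-- The free Cartesian monoid `CM = T / =_CM`. -/
def CM : Type := Quotient cmSetoid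

/-- The submonoid of `CQ` generated by (the classes of) the members of `B`,
as a set of elements of `CQ`. -/
def genSubmonoidCQ (B : List Term) : Set CQ :=
  {x | ∃ l : List Term, (∀ t ∈ l, t ∈ B) ∧ Quotient.mk cqSetoid (listProd l) = x}

/-- The submonoid of `CM` generated by (the classes of) the members of `B`,
as a set of elements of `CM`. -/
def genSubmonoidCM (B : List Term) : Set CM :=
  {x | ∃ l : List Term, (∀ t ∈ l, t ∈ B) ∧ Quotient.mk cmSetoid (listProd l) = x}

/-- A shift: a product (under `comp`) of copies of `L` and `R`,
with `I` as the empty product. -/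
inductive IsShift : Term → Prop
  | unit : IsShift I
  | left : IsShift L
  | right : IsShift R
  | comp {s t : Term} : IsShift s → IsShift t → IsShift (comp s t)

/-- The CQ normal form (normal form w.r.t. rules (1)-(5)) of `X` is a shift. -/
def nfIsShift (X : Term) : Prop :=
  ∃ N, Red rules15 X N ∧ NF rules15 N ∧ IsShift N

/-- The product `F_0 * ⋯ * F_{n-1}` of the first `n` values of a sequence. -/
def prodTake (f : ℕ → Term) (n : ℕ) : Term := listProd ((List.range n).map f)

/-- `B` covers Cantor space: there is an infinite sequence of members of `B`
such that for each shift `S` some finite initial product composed with `S`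
has a CQ normal form that is not a shift. -/
def Covers (B : List Term) : Prop :=
  ∃ f : ℕ → Term, (∀ n, f n ∈ B) ∧
    ∀ S, IsShift S → ∃ n, ¬ nfIsShift (comp S (prodTake f n))

/-- The shift `S` is bad for `B`: for every finite sequence of members of `B`,
the CQ normal form of `S*F_1*⋯*F_n` is a shift. -/
def BadFor (B : List Term) (S : Term) : Prop :=
  ∀ l : List Term, (∀ t ∈ l, t ∈ B) → nfIsShift (comp S (listProd l))

/-- The length of a shift: the number of occurrences of `L` and `R`. -/
def lenLR : Term → ℕ
  | I => 0
  | L => 1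
  | R => 1
  | comp a b => lenLR a + lenLR b
  | pair a b => lenLR a + lenLR b

/-- `S` is extenuative for `B`: it is bad for `B` and the CQ normal forms of
`S*F_1*⋯*F_k` (for `F_i` in `B`) have unbounded length. -/
def Extenuative (B : List Term) (S : Term) : Prop :=
  BadFor B S ∧ ∀ n : ℕ, ∃ l : List Term, (∀ t ∈ l, t ∈ B) ∧
    ∃ N, Red rules15 (comp S (listProd l)) N ∧ NF rules15 N ∧ n ≤ lenLR N

/-- A term represents a right invertible element of CM. -/
def RightInvCM (F : Term) : Prop := ∃ G, CMEq (comp F G) I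

/-!
Normalization by evaluation. Terms are evaluated into binary trees whose leaves are words in
`L, R`, and in which no node is a surjective-pairing redex `⟨L*w, R*w⟩`. On such trees
composition is computed by structural recursion (a word acts letter by letter, a letter projects
out of a pair), and it satisfies the Cartesian monoid laws, so evaluation is invariant under
`=_CM`. Reading a value back as a term, every term rewrites by rules (1)-(7) to the readback of
its value, which is thus a common reduct of any two `=_CM`-equivalent terms.
-/

namespace Red

variable {J : Set ℕ} {a b c : Term}

theorem refl (J : Set ℕ) (a : Term) : Red J a a :=
  ⟨a, .refl, .refl a⟩

theorem of_assocEq (h : AssocEq a b) : Red J a b :=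
  ⟨a, .refl, h⟩

theorem of_rule {n : ℕ} (hn : n ∈ J) (h : Rule n a b) : Red J a b :=
  ⟨b, .single ⟨a, b, .refl a, .rule hn h, .refl b⟩, .refl b⟩

theorem trans (h₁ : Red J a b) (h₂ : Red J b c) : Red J a c := by
  obtain ⟨a', ha', e₁⟩ := h₁
  obtain ⟨b', hb', e₂⟩ := h₂
  rcases hb'.cases_head with rfl | ⟨x, ⟨b₀, x₀, e, s, e'⟩, hx⟩
  · exact ⟨a', ha', e₁.trans e₂⟩
  · exact ⟨b', ha'.trans (.head ⟨b₀, x₀, e₁.trans e, s, e'⟩ hx), e₂⟩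

theorem map (f : Term → Term) (hA : ∀ {x y}, AssocEq x y → AssocEq (f x) (f y))
    (hS : ∀ {x y}, Step J x y → Step J (f x) (f y)) (h : Red J a b) : Red J (f a) (f b) := by
  obtain ⟨c, hc, e⟩ := h
  refine ⟨f c, hc.lift f ?_, hA e⟩
  rintro x y ⟨x', y', e₁, s, e₂⟩
  exact ⟨f x', f y', hA e₁, hS s, hA e₂⟩

theorem comp_congr {a' b' : Term} (ha : Red J a a') (hb : Red J b b') :
    Red J (comp a b) (comp a' b') :=
  (ha.map (comp · b) (·.comp_congr (.refl b)) .comp_left).trans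
    (hb.map (comp a' ·) (AssocEq.comp_congr (.refl a')) .comp_right)

theorem pair_congr {a' b' : Term} (ha : Red J a a') (hb : Red J b b') :
    Red J (pair a b) (pair a' b') :=
  (ha.map (pair · b) (·.pair_congr (.refl b)) .pair_left).trans
    (hb.map (pair a' ·) (AssocEq.pair_congr (.refl a')) .pair_right)

theorem of_rule17 {n : ℕ} (h : Rule n a b) : Red rules17 a b :=
  of_rule (by cases h <;> simp [rules17]) h

end Red

/-- Words over `{L, R}` are lists of booleans: `false` stands for `L`, `true` for `R`. -/
inductive Value : Type
  | word : List Bool → Value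
  | pair : Value → Value → Value

namespace Value

/-- The pair `⟨L*w, R*w⟩`, which rule (6) (or (7), for `w` empty) collapses to `w`. -/
def IsEta (x y : Value) : Prop := ∃ w, x = word (false :: w) ∧ y = word (true :: w)

def mkPair : Value → Value → Value
  | word (false :: w), word (true :: w') =>
      if w = w' then word w else pair (word (false :: w)) (word (true :: w'))
  | x, y => pair x y

@[simp]
theorem mkPair_eta (w : List Bool) : mkPair (word (false :: w)) (word (true :: w)) = word w := by
  simp [mkPair]

theorem mkPair_of_not_isEta {x y : Value} (h : ¬ IsEta x y) : mkPair x y = pair x y := by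
  unfold mkPair
  split <;> grind [IsEta]

/-- Left composition with `L` (for `false`) or `R` (for `true`). -/
def proj : Bool → Value → Value
  | b, word w => word (b :: w)
  | false, pair x _ => x
  | true, pair _ y => y

@[simp]
theorem proj_word (b : Bool) (w : List Bool) : proj b (word w) = word (b :: w) := by
  cases b <;> rfl

@[simp]
theorem proj_false_mkPair (x y : Value) : proj false (mkPair x y) = x := by
  by_cases h : IsEta x y
  · obtain ⟨w, rfl, rfl⟩ := h
    simp
  · rw [mkPair_of_not_isEta h]
    rfl

@[simp]
theorem proj_true_mkPair (x y : Value) : proj true (mkPair x y) = y := by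
  by_cases h : IsEta x y
  · obtain ⟨w, rfl, rfl⟩ := h
    simp
  · rw [mkPair_of_not_isEta h]
    rfl

protected def comp : Value → Value → Value
  | word w, n => w.foldr proj n
  | pair x y, n => mkPair (x.comp n) (y.comp n)

def Reduced : Value → Prop
  | word _ => True
  | pair x y => x.Reduced ∧ y.Reduced ∧ ¬ IsEta x y

theorem Reduced.proj {n : Value} (b : Bool) (h : n.Reduced) : (proj b n).Reduced := by
  cases n with
  | word w => simp [Reduced]
  | pair x y => cases b <;> [exact h.1; exact h.2.1]

theorem Reduced.mkPair {x y : Value} (hx : x.Reduced) (hy : y.Reduced) :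
    (mkPair x y).Reduced := by
  by_cases h : IsEta x y
  · obtain ⟨w, rfl, rfl⟩ := h
    simp [Reduced]
  · rw [mkPair_of_not_isEta h]
    exact ⟨hx, hy, h⟩

theorem Reduced.foldr_proj {n : Value} (w : List Bool) (h : n.Reduced) :
    (w.foldr Value.proj n).Reduced := by
  induction w with
  | nil => exact h
  | cons b w ih => exact ih.proj b

theorem Reduced.comp {m n : Value} (hm : m.Reduced) (hn : n.Reduced) : (m.comp n).Reduced := by
  induction m with
  | word w => exact hn.foldr_proj w
  | pair x y ihx ihy => exact (ihx hm.1).mkPair (ihy hm.2.1)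

theorem mkPair_proj_proj {n : Value} (h : n.Reduced) :
    mkPair (proj false n) (proj true n) = n := by
  cases n with
  | word w => simp
  | pair x y => exact mkPair_of_not_isEta h.2.2

theorem proj_comp (b : Bool) (n m : Value) : (proj b n).comp m = proj b (n.comp m) := by
  cases n with
  | word w => simp [Value.comp]
  | pair x y => cases b <;> [exact (proj_false_mkPair _ _).symm; exact (proj_true_mkPair _ _).symm]

theorem foldr_proj_comp (w : List Bool) (n m : Value) :
    (w.foldr proj n).comp m = w.foldr proj (n.comp m) := by
  induction w with
  | nil => rfl
  | cons b w ih => rw [List.foldr_cons, proj_comp, ih, List.foldr_cons]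

theorem foldr_proj_word (w v : List Bool) : w.foldr proj (word v) = word (w ++ v) := by
  induction w with
  | nil => rfl
  | cons b w ih => rw [List.foldr_cons, ih, proj_word, List.cons_append]

theorem mkPair_comp {z : Value} (x y : Value) (hz : z.Reduced) :
    (mkPair x y).comp z = mkPair (x.comp z) (y.comp z) := by
  by_cases h : IsEta x y
  · obtain ⟨w, rfl, rfl⟩ := h
    simp only [mkPair_eta, Value.comp, List.foldr_cons]
    exact (mkPair_proj_proj (hz.foldr_proj w)).symm
  · rw [mkPair_of_not_isEta h]
    rfl

theorem comp_assoc {c : Value} (a b : Value) (hc : c.Reduced) :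
    (a.comp b).comp c = a.comp (b.comp c) := by
  induction a with
  | word w => exact foldr_proj_comp w b c
  | pair x y ihx ihy => simp only [Value.comp, mkPair_comp _ _ hc, ihx, ihy]

theorem comp_word_nil {n : Value} (h : n.Reduced) : n.comp (word []) = n := by
  induction n with
  | word w => simp [Value.comp, foldr_proj_word]
  | pair x y ihx ihy =>
    rw [Value.comp, ihx h.1, ihy h.2.1, mkPair_of_not_isEta h.2.2]

end Value

open Value

def eval : Term → Value
  | I => word []
  | L => word [false]
  | R => word [true]
  | Term.comp a b => (eval a).comp (eval b)
  | Term.pair a b => mkPair (eval a) (eval b)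

theorem reduced_eval (t : Term) : (eval t).Reduced := by
  induction t with
  | comp a b iha ihb => exact iha.comp ihb
  | pair a b iha ihb => exact iha.mkPair ihb
  | _ => trivial

theorem eval_eq_of_cmEq {F G : Term} (h : CMEq F G) : eval F = eval G := by
  induction h with
  | proj_left f g => simp [eval, Value.comp]
  | proj_right f g => simp [eval, Value.comp]
  | lift f g h => exact mkPair_comp _ _ (reduced_eval h)
  | surj => simp [eval]
  | assoc a b c => exact comp_assoc _ _ (reduced_eval c)
  | one_mul a => rfl
  | mul_one a => exact comp_word_nil (reduced_eval a)
  | refl a => rfl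
  | symm _ ih => exact ih.symm
  | trans _ _ ih₁ ih₂ => exact ih₁.trans ih₂
  | comp_congr _ _ ih₁ ih₂ => simp only [eval, ih₁, ih₂]
  | pair_congr _ _ ih₁ ih₂ => simp only [eval, ih₁, ih₂]

def letter : Bool → Term
  | false => L
  | true => R

/-- A nonempty word is read back without a trailing `I`, so that `L` and `R` are their own
readbacks. -/
def wordToTerm : List Bool → Term
  | [] => I
  | [b] => letter b
  | b :: w => comp (letter b) (wordToTerm w)

def Value.toTerm : Value → Term
  | word w => wordToTerm w
  | Value.pair x y => Term.pair x.toTerm y.toTerm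

theorem red_toTerm_mkPair (x y : Value) :
    Red rules17 (pair x.toTerm y.toTerm) (mkPair x y).toTerm := by
  by_cases h : IsEta x y
  · obtain ⟨_ | ⟨b, w⟩, rfl, rfl⟩ := h
    · exact .of_rule17 .r7
    · rw [mkPair_eta]
      exact .of_rule17 (.r6 (wordToTerm (b :: w)))
  · rw [mkPair_of_not_isEta h]
    exact .refl _ _

theorem red_toTerm_proj (b : Bool) (n : Value) :
    Red rules17 (comp (letter b) n.toTerm) (proj b n).toTerm := by
  cases n with
  | word w =>
    rcases w with _ | ⟨c, w⟩
    · exact .of_rule17 (.r5 (letter b))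
    · exact .refl _ _
  | pair x y => cases b <;> [exact .of_rule17 (.r1 _ _); exact .of_rule17 (.r2 _ _)]

theorem red_toTerm_comp (m n : Value) :
    Red rules17 (comp m.toTerm n.toTerm) (m.comp n).toTerm := by
  induction m with
  | word w =>
    induction w with
    | nil => exact .of_rule17 (.r4 _)
    | cons b w ih =>
      rcases w with _ | ⟨c, w⟩
      · exact red_toTerm_proj b n
      · exact (Red.of_assocEq (.assoc _ _ _)).trans
          (((Red.refl _ _).comp_congr ih).trans (red_toTerm_proj b _))
  | pair x y ihx ihy =>
    exact (Red.of_rule17 (.r3 _ _ _)).trans ((ihx.pair_congr ihy).trans (red_toTerm_mkPair _ _))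

theorem red_toTerm_eval (t : Term) : Red rules17 t (eval t).toTerm := by
  induction t with
  | comp a b iha ihb => exact (iha.comp_congr ihb).trans (red_toTerm_comp _ _)
  | pair a b iha ihb => exact (iha.pair_congr ihb).trans (red_toTerm_mkPair _ _)
  | _ => exact .refl _ _

/-- Theorem 1(1) (Church-Rosser): terms equivalent under `=_CM`
have a common rewrite under rules (1)-(7). -/
theorem church_rosser (F G : Term) (h : CMEq F G) :
    ∃ U : Term, Red rules17 F U ∧ Red rules17 G U :=
  ⟨(eval F).toTerm, red_toTerm_eval F, eval_eq_of_cmEq h ▸ red_toTerm_eval G⟩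
end

section
/- (Theorem 2, simplicity of CM) If terms F and G have distinct normal forms with respect to the rewrite rules (1)-(7) (equivalently, F ≠ G in the free Cartesian monoid), then there exist terms H and K such that H*F*K =_CM L and H*G*K =_CM R. -/
open Term

/-!
In any Cartesian monoid, a product of `fst`s and `snd`s (a shift) composed with an element `z`
is the component of `z` at a path, so two distinct paths are separated by a tree on the right
whose leaves at the two paths are `fst` and `snd`, once the paths are made incomparable by a
letter on the left. Every element of the free Cartesian monoid is a tree of pairs with shifts at
its leaves, and a shift `x` is the pair `⟨fst * x, snd * x⟩` of two shifts. Two distinct trees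
therefore differ in a component, and composing with `fst` or `snd` on the left passes to that
component.
-/

class CartesianMonoid (M : Type*) extends Monoid M where
  fst : M
  snd : M
  pair : M → M → M
  fst_mul_pair (a b : M) : fst * pair a b = a
  snd_mul_pair (a b : M) : snd * pair a b = b
  pair_mul (a b c : M) : pair a b * c = pair (a * c) (b * c)
  pair_fst_snd : pair fst snd = 1

namespace CartesianMonoid

variable {M : Type*} [CartesianMonoid M]

attribute [simp] fst_mul_pair snd_mul_pair

theorem pair_fst_mul_snd_mul (x : M) : pair (fst * x) (snd * x) = x := by
  rw [← pair_mul, pair_fst_snd, one_mul]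

def proj (c : Bool) : M := cond c snd fst

theorem proj_mul_pair_self (c : Bool) (x : M) : proj c * pair x x = x := by
  cases c <;> simp [proj]

/-- `shift s * z` is the component of `z` at the path `s`, read from the root. -/
def shift : List Bool → M
  | [] => 1
  | c :: s => shift s * proj c

theorem proj_mul_shift (c : Bool) (s : List Bool) :
    proj c * shift s = (shift (s ++ [c]) : M) := by
  induction s with
  | nil => simp [shift]
  | cons d s ih => simp [shift, ← mul_assoc, ih]

theorem shift_eq_pair (s : List Bool) :
    (shift s : M) = pair (shift (s ++ [false])) (shift (s ++ [true])) := by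
  rw [← proj_mul_shift, ← proj_mul_shift, proj, proj, cond_false, cond_true,
    pair_fst_mul_snd_mul]

theorem exists_shift_mul_eq (s : List Bool) (z : M) : ∃ x, shift s * x = z := by
  induction s with
  | nil => exact ⟨z, one_mul z⟩
  | cons c s ih =>
    obtain ⟨x, hx⟩ := ih
    exact ⟨pair x x, by rw [shift, mul_assoc, proj_mul_pair_self, hx]⟩

def Separates (x y : M) : Prop := ∃ h k : M, h * x * k = fst ∧ h * y * k = snd

namespace Separates

variable {x y x' y' : M}

theorem symm (hxy : Separates x y) : Separates y x := by
  obtain ⟨h, k, hx, hy⟩ := hxy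
  exact ⟨h, k * pair snd fst, by rw [← mul_assoc, hy, snd_mul_pair],
    by rw [← mul_assoc, hx, fst_mul_pair]⟩

theorem of_mul_left (a : M) (hxy : Separates (a * x) (a * y)) : Separates x y := by
  obtain ⟨h, k, hx, hy⟩ := hxy
  exact ⟨h * a, k, by rwa [mul_assoc h a x], by rwa [mul_assoc h a y]⟩

theorem mul_right {a b : M} (hab : a * b = 1) (hxy : Separates x y) :
    Separates (x * a) (y * a) := by
  obtain ⟨h, k, hx, hy⟩ := hxy
  exact ⟨h, b * k, by simpa [mul_assoc, ← mul_assoc a, hab] using hx,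
    by simpa [mul_assoc, ← mul_assoc a, hab] using hy⟩

theorem pair_left (hxx' : Separates x x') : Separates (pair x y) (pair x' y') :=
  of_mul_left fst (by rwa [fst_mul_pair, fst_mul_pair])

theorem pair_right (hyy' : Separates y y') : Separates (pair x y) (pair x' y') :=
  of_mul_left snd (by rwa [snd_mul_pair, snd_mul_pair])

theorem pair (hne : pair x y ≠ pair x' y') (hx : x ≠ x' → Separates x x')
    (hy : y ≠ y' → Separates y y') : Separates (pair x y) (pair x' y') := by
  by_cases hxx' : x = x'
  · subst hxx'
    exact pair_right (hy fun hyy' => hne (hyy' ▸ rfl))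
  · exact pair_left (hx hxx')

end Separates

theorem separates_shift_cons_not_cons (c : Bool) (s t : List Bool) :
    Separates (shift (c :: s) : M) (shift ((!c) :: t)) := by
  obtain ⟨x, hx⟩ := exists_shift_mul_eq s (fst : M)
  obtain ⟨y, hy⟩ := exists_shift_mul_eq t (snd : M)
  cases c
  · exact ⟨1, pair x y, by simp [shift, proj, mul_assoc, hx],
      by simp [shift, proj, mul_assoc, hy]⟩
  · exact ⟨1, pair y x, by simp [shift, proj, mul_assoc, hx],
      by simp [shift, proj, mul_assoc, hy]⟩

theorem separates_shift_nil_cons (d : Bool) (t : List Bool) :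
    Separates (shift [] : M) (shift (d :: t)) := by
  apply Separates.of_mul_left (proj (!d))
  have := separates_shift_cons_not_cons (M := M) (!d) [] (t ++ [!d])
  rw [Bool.not_not] at this
  simpa [shift, ← mul_assoc, proj_mul_shift] using this

theorem separates_shift {s t : List Bool} (hst : s ≠ t) : Separates (shift s : M) (shift t) := by
  induction s generalizing t with
  | nil =>
    cases t with
    | nil => exact absurd rfl hst
    | cons d t => exact separates_shift_nil_cons d t
  | cons c s ih =>
    cases t with
    | nil => exact (separates_shift_nil_cons c s).symm
    | cons d t =>
      by_cases hcd : c = d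
      · subst hcd
        exact (ih fun h => hst (h ▸ rfl)).mul_right (proj_mul_pair_self c 1)
      · obtain rfl : d = !c := by cases c <;> cases d <;> simp_all
        exact separates_shift_cons_not_cons c s t

inductive IsShiftTree : M → Prop
  | leaf (s : List Bool) : IsShiftTree (shift s)
  | node {x y : M} : IsShiftTree x → IsShiftTree y → IsShiftTree (pair x y)

namespace IsShiftTree

variable {x y : M}

theorem proj_mul (c : Bool) (hx : IsShiftTree x) : IsShiftTree (proj c * x) := by
  cases hx with
  | leaf s => exact proj_mul_shift (M := M) c s ▸ leaf _
  | node ha hb => cases c <;> simpa [proj]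

theorem shift_mul (s : List Bool) (hy : IsShiftTree y) : IsShiftTree (shift s * y) := by
  induction s generalizing y with
  | nil => simpa [shift]
  | cons c s ih => simpa [shift, mul_assoc] using ih (hy.proj_mul c)

theorem mul (hx : IsShiftTree x) (hy : IsShiftTree y) : IsShiftTree (x * y) := by
  induction hx with
  | leaf s => exact hy.shift_mul s
  | node _ _ iha ihb => rw [pair_mul]; exact iha.node ihb

theorem exists_eq_pair (hx : IsShiftTree x) :
    ∃ a b, IsShiftTree a ∧ IsShiftTree b ∧ x = pair a b := by
  cases hx with
  | leaf s => exact ⟨_, _, leaf _, leaf _, shift_eq_pair s⟩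
  | node ha hb => exact ⟨_, _, ha, hb, rfl⟩

theorem separates (hx : IsShiftTree x) (hy : IsShiftTree y) (hne : x ≠ y) : Separates x y := by
  induction hx generalizing y with
  | leaf s =>
    induction hy generalizing s with
    | leaf t => exact separates_shift fun h => hne (h ▸ rfl)
    | node _ _ iha ihb =>
      rw [shift_eq_pair] at hne ⊢
      exact Separates.pair hne (iha _) (ihb _)
  | node _ _ iha ihb =>
    obtain ⟨a, b, ha, hb, rfl⟩ := hy.exists_eq_pair
    exact Separates.pair hne (iha ha) (ihb hb)

end IsShiftTree

end CartesianMonoid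

namespace CM

open CartesianMonoid

def mk : Term → CM := Quotient.mk cmSetoid

instance : CartesianMonoid CM where
  mul := Quotient.map₂' comp fun _ _ ha _ _ hb => CMEq.comp_congr ha hb
  one := mk I
  mul_assoc := by rintro ⟨a⟩ ⟨b⟩ ⟨c⟩; exact Quotient.sound (CMEq.assoc a b c)
  one_mul := by rintro ⟨a⟩; exact Quotient.sound (CMEq.one_mul a)
  mul_one := by rintro ⟨a⟩; exact Quotient.sound (CMEq.mul_one a)
  fst := mk L
  snd := mk R
  pair := Quotient.map₂' Term.pair fun _ _ ha _ _ hb => CMEq.pair_congr ha hb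
  fst_mul_pair := by rintro ⟨a⟩ ⟨b⟩; exact Quotient.sound (CMEq.proj_left a b)
  snd_mul_pair := by rintro ⟨a⟩ ⟨b⟩; exact Quotient.sound (CMEq.proj_right a b)
  pair_mul := by rintro ⟨a⟩ ⟨b⟩ ⟨c⟩; exact Quotient.sound (CMEq.lift a b c)
  pair_fst_snd := Quotient.sound CMEq.surj

theorem mk_surjective : Function.Surjective mk := Quotient.mk_surjective

theorem mk_comp (a b : Term) : mk (comp a b) = mk a * mk b := rfl

theorem mk_eq_mk {a b : Term} : mk a = mk b ↔ CMEq a b := Quotient.eq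

theorem isShiftTree_mk (t : Term) : IsShiftTree (mk t) := by
  induction t with
  | I => exact IsShiftTree.leaf []
  | L =>
    have h := IsShiftTree.leaf (M := CM) [false]
    rwa [shift, shift, one_mul] at h
  | R =>
    have h := IsShiftTree.leaf (M := CM) [true]
    rwa [shift, shift, one_mul] at h
  | comp a b iha ihb => exact iha.mul ihb
  | pair a b iha ihb => exact iha.node ihb

theorem separates_of_ne {x y : CM} (hne : x ≠ y) : Separates x y := by
  obtain ⟨a, rfl⟩ := mk_surjective x
  obtain ⟨b, rfl⟩ := mk_surjective y
  exact (isShiftTree_mk a).separates (isShiftTree_mk b) hne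

end CM

/-- Theorem 2 (simplicity of CM): if `F ≠ G` in the free Cartesian monoid
(equivalently, they have distinct normal forms w.r.t. (1)-(7)), then there are
`H`, `K` with `H*F*K = L` and `H*G*K = R` in CM. -/
theorem CM_simple (F G : Term) (h : ¬ CMEq F G) :
    ∃ H K : Term, CMEq (comp H (comp F K)) L ∧ CMEq (comp H (comp G K)) R := by
  obtain ⟨H, K, hL, hR⟩ := CM.separates_of_ne (mt CM.mk_eq_mk.mp h)
  obtain ⟨H, rfl⟩ := CM.mk_surjective H
  obtain ⟨K, rfl⟩ := CM.mk_surjective K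
  rw [mul_assoc, ← CM.mk_comp, ← CM.mk_comp] at hL hR
  exact ⟨H, K, CM.mk_eq_mk.mp hL, CM.mk_eq_mk.mp hR⟩
end
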